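/- arXiv:2603.27635 — 2 statements merged into one kernel-verified Lean document; each statement's English description precedes it below -/
import Mathlib

section
/- Let N ≥ 1 be an integer, let ε_1, …, ε_n be integers with ε_i ≥ N for all i, and let k ≥ N be an integer. Then the ratio of Lebesgue measures of fundamental intervals satisfies N/(3k²) ≤ |I_{n+1}(ε_1, …, ε_n, k)| / |I_n(ε_1, …, ε_n)| ≤ 2N/k². -/
open MeasureTheory Filter Set
open scoped ENNReal

/-- The `N`-expansion map `T_N : [0,1] → [0,1]`,
`T_N x = N/x - ⌊N/x⌋` for `x ≠ 0`, `T_N 0 = 0`. -/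
noncomputable def TN (N : ℕ) (x : ℝ) : ℝ :=
  if x = 0 then 0 else (N : ℝ) / x - (⌊(N : ℝ) / x⌋ : ℝ)

/-- `digit N n x` is the `(n+1)`-st digit `ε_{n+1}(x)` of the `N`-expansion of `x`,
i.e. `ε_m(x) = digit N (m-1) x` for `m ≥ 1`. -/
noncomputable def digit (N : ℕ) (n : ℕ) (x : ℝ) : ℤ :=
  ⌊(N : ℝ) / ((TN N)^[n] x)⌋

/-- The set `E_M` of irrationals in `(0,1)` all of whose `N`-expansion digits lie in
`{N, …, M}`. -/
noncomputable def EM (N M : ℕ) : Set ℝ :=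
  {x | x ∈ Set.Ioo (0 : ℝ) 1 ∧ Irrational x ∧
    ∀ n : ℕ, (N : ℤ) ≤ digit N n x ∧ digit N n x ≤ (M : ℤ)}

/-- The set `F_{α,N}` of irrationals in `(0,1)` all of whose `N`-expansion digits
are at least `α`. -/
noncomputable def Fset (N : ℕ) (α : ℝ) : Set ℝ :=
  {x | x ∈ Set.Ioo (0 : ℝ) 1 ∧ Irrational x ∧ ∀ n : ℕ, α ≤ (digit N n x : ℝ)}

/-- The set `F_N` of irrationals in `(0,1)` whose `N`-expansion digits tend to infinity. -/
noncomputable def FNset (N : ℕ) : Set ℝ :=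
  {x | x ∈ Set.Ioo (0 : ℝ) 1 ∧ Irrational x ∧
    Filter.Tendsto (fun n => digit N n x) Filter.atTop Filter.atTop}

/-- Convergent denominators of the `N`-expansion with digit sequence `ε`
(where `ε i` is the `(i+1)`-st digit `ε_{i+1}`), shifted by one:
`qden N ε (n+1) = q_n`, so `qden N ε 0 = q_{-1} = 0`, `qden N ε 1 = q_0 = 1`,
and `q_n = ε_n q_{n-1} + N q_{n-2}`. -/
def qden (N : ℕ) (ε : ℕ → ℤ) : ℕ → ℤ
  | 0 => 0
  | 1 => 1
  | (n + 2) => ε n * qden N ε (n + 1) + (N : ℤ) * qden N ε n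

/-- Convergent numerators of the `N`-expansion with digit sequence `ε`, shifted by one:
`pnum N ε (n+1) = p_n`, so `pnum N ε 0 = p_{-1} = 1`, `pnum N ε 1 = p_0 = 0`,
and `p_n = ε_n p_{n-1} + N p_{n-2}`. -/
def pnum (N : ℕ) (ε : ℕ → ℤ) : ℕ → ℤ
  | 0 => 1
  | 1 => 0
  | (n + 2) => ε n * pnum N ε (n + 1) + (N : ℤ) * pnum N ε n

/-- The fundamental interval `I_n(ε_1, …, ε_n)`: irrationals in `(0,1)` whose first `n`
`N`-expansion digits are `ε 0, …, ε (n-1)` (i.e. `ε_i(x) = ε (i-1)` for `1 ≤ i ≤ n`). -/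
noncomputable def fundInterval (N : ℕ) (n : ℕ) (ε : ℕ → ℤ) : Set ℝ :=
  {x | x ∈ Set.Ioo (0 : ℝ) 1 ∧ Irrational x ∧ ∀ i < n, digit N i x = ε i}

/-!
Peeling off the first digit, `x ↦ N / (ε₁ + T_N x)`, shows by induction on `n` that, up to
rationals, `I_n(ε)` is the open interval with endpoints `p_n / q_n` and
`(p_n + p_{n-1}) / (q_n + q_{n-1})`. The determinant identity `p_n q_{n-1} - p_{n-1} q_n = ±N^n`
then gives `|I_n| = N^n / (q_n (q_n + q_{n-1}))`, so the ratio in question is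
`N q_n (q_n + q_{n-1}) / (q_{n+1} (q_{n+1} + q_n))` with `q_{n+1} = k q_n + N q_{n-1}`; the bounds
follow from `0 ≤ q_{n-1} ≤ q_n` and `N ≤ k`.
-/

lemma one_le_of_natCast_le {N : ℕ} (hN : 1 ≤ N) {e : ℤ} (he : (N : ℤ) ≤ e) : 1 ≤ e :=
  le_trans (by exact_mod_cast hN) he

lemma pnum_succ_eq_natCast_mul_qden_tail (N : ℕ) (ε : ℕ → ℤ) (n : ℕ) :
    pnum N ε (n + 1) = N * qden N (fun i => ε (i + 1)) n := by
  induction n using Nat.twoStepInduction with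
  | zero => simp [pnum, qden]
  | one => simp [pnum, qden]
  | more n ih₀ ih₁ =>
    rw [pnum, ih₀, ih₁, qden]
    ring

lemma qden_succ_eq_tail (N : ℕ) (ε : ℕ → ℤ) (n : ℕ) :
    qden N ε (n + 1) = ε 0 * qden N (fun i => ε (i + 1)) n + pnum N (fun i => ε (i + 1)) n := by
  induction n using Nat.twoStepInduction with
  | zero => simp [pnum, qden]
  | one => simp [pnum, qden]
  | more n ih₀ ih₁ =>
    rw [qden, ih₀, ih₁, qden, pnum]
    ring

lemma pnum_mul_qden_sub_pnum_mul_qden (N : ℕ) (ε : ℕ → ℤ) (n : ℕ) :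
    pnum N ε (n + 1) * qden N ε n - pnum N ε n * qden N ε (n + 1) = -(-(N : ℤ)) ^ n := by
  induction n with
  | zero => simp [pnum, qden]
  | succ n ih =>
    rw [pnum, qden]
    linear_combination (-(N : ℤ)) * ih

lemma qden_monotone {N : ℕ} {ε : ℕ → ℤ} (hε : ∀ i, 1 ≤ ε i) : Monotone (qden N ε) := by
  have h : ∀ n, 0 ≤ qden N ε n ∧ qden N ε n ≤ qden N ε (n + 1) := by
    intro n
    induction n with
    | zero => simp [qden]
    | succ n ih =>
      refine ⟨ih.1.trans ih.2, ?_⟩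
      rw [qden]
      nlinarith [hε n]
  exact monotone_nat_of_le_succ fun n => (h n).2

lemma qden_nonneg {N : ℕ} {ε : ℕ → ℤ} (hε : ∀ i, 1 ≤ ε i) (n : ℕ) : 0 ≤ qden N ε n :=
  qden_monotone hε (Nat.zero_le n)

lemma one_le_qden_succ {N : ℕ} {ε : ℕ → ℤ} (hε : ∀ i, 1 ≤ ε i) (n : ℕ) :
    1 ≤ qden N ε (n + 1) :=
  qden_monotone hε (Nat.le_add_left 1 n)

/-- For `x ∈ I_n(ε)` one has `x = convergentMap N ε n (T_N^n x)`, so the values at `0` and `1`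
are the endpoints of `I_n(ε)`. -/
noncomputable def convergentMap (N : ℕ) (ε : ℕ → ℤ) (n : ℕ) (t : ℝ) : ℝ :=
  (pnum N ε (n + 1) + t * pnum N ε n) / (qden N ε (n + 1) + t * qden N ε n)

lemma convergentMap_zero (N : ℕ) (ε : ℕ → ℤ) (t : ℝ) : convergentMap N ε 0 t = t := by
  simp [convergentMap, pnum, qden]

lemma convergentMap_succ {N : ℕ} {ε : ℕ → ℤ} (hε : ∀ i, 1 ≤ ε i) (n : ℕ) {t : ℝ} (ht : 0 ≤ t) :
    convergentMap N ε (n + 1) t = N / (ε 0 + convergentMap N (fun i => ε (i + 1)) n t) := by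
  set ε' : ℕ → ℤ := fun i => ε (i + 1)
  have hε' : ∀ i, 1 ≤ ε' i := fun i => hε (i + 1)
  have hq₁ : (1 : ℝ) ≤ qden N ε' (n + 1) := by exact_mod_cast one_le_qden_succ hε' n
  have hq₀ : (0 : ℝ) ≤ qden N ε' n := by exact_mod_cast qden_nonneg hε' n
  have hD : 0 < (qden N ε' (n + 1) : ℝ) + t * qden N ε' n := by positivity
  unfold convergentMap
  rw [pnum_succ_eq_natCast_mul_qden_tail N ε (n + 1), pnum_succ_eq_natCast_mul_qden_tail N ε n,
    qden_succ_eq_tail N ε (n + 1), qden_succ_eq_tail N ε n]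
  push_cast
  rw [add_div' _ _ _ hD.ne', div_div_eq_mul_div]
  congr 1 <;> ring

lemma convergentMap_mem_Icc {N : ℕ} (hN : 1 ≤ N) {ε : ℕ → ℤ} (hε : ∀ i, (N : ℤ) ≤ ε i) (n : ℕ)
    {t : ℝ} (ht : t ∈ Icc 0 1) : convergentMap N ε n t ∈ Icc 0 1 := by
  induction n generalizing ε with
  | zero => rwa [convergentMap_zero]
  | succ n ih =>
    have hε₁ : ∀ i, 1 ≤ ε i := fun i => one_le_of_natCast_le hN (hε i)
    obtain ⟨hc, -⟩ := ih fun i => hε (i + 1)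
    have he : (N : ℝ) ≤ ε 0 := by exact_mod_cast hε 0
    have hN' : (1 : ℝ) ≤ N := by exact_mod_cast hN
    rw [convergentMap_succ hε₁ n ht.1]
    exact ⟨div_nonneg (by linarith) (by linarith), (div_le_one (by linarith)).mpr (by linarith)⟩

lemma TN_eq_fract {N : ℕ} {x : ℝ} (hx : x ≠ 0) : TN N x = Int.fract (N / x) := by
  rw [TN, if_neg hx, Int.fract]

lemma Irrational.TN {N : ℕ} (hN : N ≠ 0) {x : ℝ} (hx : Irrational x) : Irrational (TN N x) := by
  rw [TN_eq_fract hx.ne_zero]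
  exact (hx.natCast_div hN).sub_intCast _

lemma TN_mem_Ioo {N : ℕ} (hN : N ≠ 0) {x : ℝ} (hx : Irrational x) : TN N x ∈ Ioo 0 1 := by
  have h := (hx.TN hN).ne_zero
  rw [TN_eq_fract hx.ne_zero] at h ⊢
  exact ⟨(Int.fract_nonneg _).lt_of_ne' h, Int.fract_lt_one _⟩

lemma mem_fundInterval_succ {N : ℕ} (hN : N ≠ 0) {n : ℕ} {ε : ℕ → ℤ} {x : ℝ} :
    x ∈ fundInterval N (n + 1) ε ↔ x ∈ Ioo 0 1 ∧ Irrational x ∧ ⌊(N : ℝ) / x⌋ = ε 0 ∧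
      TN N x ∈ fundInterval N n (fun i => ε (i + 1)) := by
  simp only [fundInterval, mem_ofPred_eq, digit, Nat.forall_lt_succ_left, Function.iterate_zero,
    id, Function.iterate_succ_apply]
  constructor
  · rintro ⟨hx01, hx, h0, h⟩
    exact ⟨hx01, hx, h0, TN_mem_Ioo hN hx, hx.TN hN, h⟩
  · rintro ⟨hx01, hx, h0, -, -, h⟩
    exact ⟨hx01, hx, h0, h⟩

lemma div_sub_mem_uIoo_iff {c e a b x : ℝ} (hc : 0 < c) (ha : 0 < e + a) (hb : 0 < e + b)
    (hx : 0 < x) : c / x - e ∈ uIoo a b ↔ x ∈ uIoo (c / (e + a)) (c / (e + b)) := by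
  wlog hab : a ≤ b generalizing a b
  · rw [uIoo_comm, uIoo_comm (c / _)]
    exact this hb ha (le_of_not_ge hab)
  have hdiv : c / (e + b) ≤ c / (e + a) := div_le_div_of_nonneg_left hc.le ha (by linarith)
  rw [uIoo_of_le hab, uIoo_of_ge hdiv, mem_Ioo, mem_Ioo, lt_sub_iff_add_lt', sub_lt_iff_lt_add',
    lt_div_comm₀ ha hx, div_lt_comm₀ hx hb, and_comm]

lemma fundInterval_eq {N : ℕ} (hN : 1 ≤ N) {ε : ℕ → ℤ} (hε : ∀ i, (N : ℤ) ≤ ε i) (n : ℕ) :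
    fundInterval N n ε =
      {x | Irrational x} ∩ uIoo (convergentMap N ε n 0) (convergentMap N ε n 1) := by
  induction n generalizing ε with
  | zero =>
    ext x
    simp [fundInterval, convergentMap_zero, and_comm]
  | succ n ih =>
    have hN₀ : N ≠ 0 := Nat.one_le_iff_ne_zero.mp hN
    have hε₁ : ∀ i, 1 ≤ ε i := fun i => one_le_of_natCast_le hN (hε i)
    have hNr : (1 : ℝ) ≤ N := by exact_mod_cast hN
    have he : (N : ℝ) ≤ ε 0 := by exact_mod_cast hε 0
    obtain ⟨ha₀, ha₁⟩ := convergentMap_mem_Icc hN (fun i => hε (i + 1)) n (t := 0) (by simp)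
    obtain ⟨hb₀, hb₁⟩ := convergentMap_mem_Icc hN (fun i => hε (i + 1)) n (t := 1) (by simp)
    ext x
    rw [mem_fundInterval_succ hN₀, ih fun i => hε (i + 1), convergentMap_succ hε₁ n le_rfl,
      convergentMap_succ hε₁ n zero_le_one]
    have hstep (hx : 0 < x) := div_sub_mem_uIoo_iff (c := N) (e := ε 0) (x := x)
      (a := convergentMap N (fun i => ε (i + 1)) n 0)
      (b := convergentMap N (fun i => ε (i + 1)) n 1)
      (by positivity) (by linarith) (by linarith) hx
    constructor
    · rintro ⟨hx01, hx, hfloor, -, hT⟩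
      rw [TN_eq_fract hx.ne_zero, Int.fract, hfloor] at hT
      exact ⟨hx, (hstep hx01.1).mp hT⟩
    · rintro ⟨hx, hmem⟩
      have hx₀ : 0 < x := (le_min (div_nonneg N.cast_nonneg (by linarith))
        (div_nonneg N.cast_nonneg (by linarith))).trans_lt hmem.1
      have hT := (hstep hx₀).mpr hmem
      obtain ⟨hT₀, hT₁⟩ := uIoo_subset_Ioo ⟨ha₀, ha₁⟩ ⟨hb₀, hb₁⟩ hT
      have hfloor : ⌊(N : ℝ) / x⌋ = ε 0 := Int.floor_eq_iff.mpr ⟨by linarith, by linarith⟩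
      have hx₁ : x < 1 := lt_of_not_ge fun h => by linarith [div_le_self (Nat.cast_nonneg' N) h]
      refine ⟨⟨hx₀, hx₁⟩, hx, hfloor, hx.TN hN₀, ?_⟩
      rwa [TN_eq_fract hx.ne_zero, Int.fract, hfloor]

lemma volume_setOf_irrational_inter (s : Set ℝ) : volume ({x | Irrational x} ∩ s) = volume s := by
  have h : {x : ℝ | Irrational x} ∩ s = s \ range ((↑) : ℚ → ℝ) := by
    ext x
    simp [Irrational, and_comm]
  rw [h, measure_sdiff_null ((countable_range _).measure_zero _)]

lemma abs_convergentMap_one_sub_zero {N : ℕ} {ε : ℕ → ℤ} (hε : ∀ i, 1 ≤ ε i) (n : ℕ) :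
    |convergentMap N ε n 1 - convergentMap N ε n 0| =
      N ^ n / (qden N ε (n + 1) * (qden N ε (n + 1) + qden N ε n)) := by
  have hq₁ : (1 : ℝ) ≤ qden N ε (n + 1) := by exact_mod_cast one_le_qden_succ hε n
  have hq₀ : (0 : ℝ) ≤ qden N ε n := by exact_mod_cast qden_nonneg hε n
  have hdet : (pnum N ε (n + 1) * qden N ε n - pnum N ε n * qden N ε (n + 1) : ℝ) =
      -(-(N : ℝ)) ^ n := by exact_mod_cast pnum_mul_qden_sub_pnum_mul_qden N ε n
  have hdiff : convergentMap N ε n 1 - convergentMap N ε n 0 =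
      -(pnum N ε (n + 1) * qden N ε n - pnum N ε n * qden N ε (n + 1) : ℝ) /
        (qden N ε (n + 1) * (qden N ε (n + 1) + qden N ε n)) := by
    simp only [convergentMap, one_mul, zero_mul, add_zero]
    field_simp
    ring
  rw [hdiff, hdet, neg_neg, abs_div, abs_pow, abs_neg, Nat.abs_cast, abs_of_pos (by positivity)]

lemma volume_fundInterval {N : ℕ} (hN : 1 ≤ N) {ε : ℕ → ℤ} (hε : ∀ i, (N : ℤ) ≤ ε i) (n : ℕ) :
    (volume (fundInterval N n ε)).toReal =
      N ^ n / (qden N ε (n + 1) * (qden N ε (n + 1) + qden N ε n)) := by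
  have hε₁ : ∀ i, 1 ≤ ε i := fun i => one_le_of_natCast_le hN (hε i)
  rw [fundInterval_eq hN hε, volume_setOf_irrational_inter, Real.volume_uIoo,
    ENNReal.toReal_ofReal (abs_nonneg _), abs_convergentMap_one_sub_zero hε₁]

lemma volume_fundInterval_succ_div {N : ℕ} (hN : 1 ≤ N) {ε : ℕ → ℤ} (hε : ∀ i, (N : ℤ) ≤ ε i)
    (n : ℕ) :
    (volume (fundInterval N (n + 1) ε)).toReal / (volume (fundInterval N n ε)).toReal =
      let Q : ℝ := qden N ε (n + 1)
      let R : ℝ := qden N ε n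
      let S : ℝ := ε n * Q + N * R
      N * (Q * (Q + R)) / (S * (S + Q)) := by
  have hS : (qden N ε (n + 2) : ℝ) = ε n * qden N ε (n + 1) + N * qden N ε n := by
    simp [qden]
  rw [volume_fundInterval hN hε, volume_fundInterval hN hε, hS]
  field_simp
  ring

lemma div_three_sq_le_and_le_two_div_sq {N k Q R : ℝ} (hN : 0 < N) (hNk : N ≤ k) (hk : 1 ≤ k)
    (hQ : 0 < Q) (hR : 0 ≤ R) (hRQ : R ≤ Q) :
    N / (3 * k ^ 2) ≤ N * (Q * (Q + R)) / ((k * Q + N * R) * (k * Q + N * R + Q)) ∧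
      N * (Q * (Q + R)) / ((k * Q + N * R) * (k * Q + N * R + Q)) ≤ 2 * N / k ^ 2 := by
  have hS : k * Q ≤ k * Q + N * R := by nlinarith
  constructor
  · rw [div_le_div_iff₀ (by positivity) (by positivity)]
    have h₁ : k * Q + N * R ≤ k * (Q + R) := by nlinarith
    have h₂ : k * Q + N * R + Q ≤ 3 * k * Q := by nlinarith
    have := mul_le_mul h₁ h₂ (by positivity) (by positivity)
    nlinarith
  · rw [div_le_div_iff₀ (by positivity) (by positivity)]
    have h₁ := mul_le_mul hS (hS.trans (le_add_of_nonneg_right hQ.le)) (by positivity)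
      (by positivity)
    have h₂ : Q * (Q + R) ≤ 2 * Q ^ 2 := by nlinarith
    nlinarith [mul_le_mul_of_nonneg_left h₂ (by positivity : 0 ≤ N * k ^ 2)]

/-- Ratio of lengths of successive fundamental intervals: for a digit `k = ε (n) ≥ N`
appended to `(ε_1, …, ε_n)`,
`N/(3k²) ≤ |I_{n+1}(ε_1, …, ε_n, k)| / |I_n(ε_1, …, ε_n)| ≤ 2N/k²`. -/
theorem stmt_14 (N : ℕ) (hN : 1 ≤ N) (n : ℕ) (ε : ℕ → ℤ) (hε : ∀ i, (N : ℤ) ≤ ε i) :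
    (N : ℝ) / (3 * (ε n : ℝ) ^ 2) ≤
        (volume (fundInterval N (n + 1) ε)).toReal / (volume (fundInterval N n ε)).toReal ∧
      (volume (fundInterval N (n + 1) ε)).toReal / (volume (fundInterval N n ε)).toReal ≤
        2 * (N : ℝ) / (ε n : ℝ) ^ 2 := by
  have hε₁ : ∀ i, 1 ≤ ε i := fun i => one_le_of_natCast_le hN (hε i)
  rw [volume_fundInterval_succ_div hN hε n]
  exact div_three_sq_le_and_le_two_div_sq (by exact_mod_cast hN) (by exact_mod_cast hε n)
    (by exact_mod_cast hε₁ n) (by exact_mod_cast one_le_qden_succ hε₁ n)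
    (by exact_mod_cast qden_nonneg hε₁ n) (by exact_mod_cast qden_monotone hε₁ n.le_succ)
end

section
/- Let N ≥ 1 be an integer and let α ≥ N + 2 be an integer. Then there exists a unique s ∈ (1/2, 1] satisfying (2s − 1)·(α − 1)^{2s−1} = 1 + N, and for this s one has dim_H(F_{α,N}) ≤ s. -/
open MeasureTheory Filter Set
open scoped ENNReal

/-!
Cover `F_{α,N}` by the rank-`n` cylinders with digits `d_1, …, d_n ≥ α`. Since
`x = N / (d_1 + T_N x)`, such a cylinder has diameter at most `∏ N / d_i ^ 2`, so the
`s`-dimensional cost of the cover is at most `(∑_{d ≥ α} (N / d ^ 2) ^ s) ^ n`. Comparing with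
`∫_{α-1}^∞ x^{-2s} dx` bounds the base by `N ^ s / ((2s - 1)(α - 1)^{2s-1})`, which equals
`N ^ s / (1 + N) < 1` for the root `s` of the equation. Hence `μH[s] F_{α,N} = 0`.
-/

open Metric Topology

lemma ENNReal.tsum_fin_pi_prod {E : Type*} (w : E → ℝ≥0∞) (n : ℕ) :
    ∑' f : Fin n → E, ∏ i, w (f i) = (∑' e, w e) ^ n := by
  induction n with
  | zero => simp
  | succ n ih =>
    calc ∑' f : Fin (n + 1) → E, ∏ i, w (f i)
        = ∑' p : E × (Fin n → E), w p.1 * ∏ i, w (p.2 i) := by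
          rw [← (Fin.consEquiv fun _ : Fin (n + 1) => E).tsum_eq]
          exact tsum_congr fun p => by simp [Fin.prod_univ_succ, Fin.consEquiv]
      _ = (∑' e, w e) ^ (n + 1) := by
          rw [ENNReal.tsum_prod', pow_succ', ← ih, ← ENNReal.tsum_mul_right]
          simp_rw [ENNReal.tsum_mul_left]

lemma hausdorffMeasure_eq_zero_of_tendsto_tsum {X : Type*} [EMetricSpace X] [MeasurableSpace X]
    [BorelSpace X] {ι : ℕ → Type*} [∀ n, Countable (ι n)] {d : ℝ} (hd : 0 < d) {A : Set X}
    (t : ∀ n, ι n → Set X) (hA : ∀ n, A ⊆ ⋃ i, t n i)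
    (hsum : Tendsto (fun n => ∑' i, ediam (t n i) ^ d) atTop (𝓝 0)) : μH[d] A = 0 := by
  -- The diameters tend to zero on their own: `ediam (t n i) ^ d` is one term of the `n`-th sum.
  have hr : Tendsto (fun n => (∑' i, ediam (t n i) ^ d) ^ d⁻¹) atTop (𝓝 0) := by
    have := ((ENNReal.continuous_rpow_const (y := d⁻¹)).tendsto 0).comp hsum
    rwa [ENNReal.zero_rpow_of_pos (inv_pos.2 hd)] at this
  have ht : ∀ n i, ediam (t n i) ≤ (∑' i, ediam (t n i) ^ d) ^ d⁻¹ := fun n i => by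
    simpa [hd.ne'] using
      ENNReal.rpow_le_rpow (ENNReal.le_tsum (f := fun i => ediam (t n i) ^ d) i)
        (inv_pos.2 hd).le
  refine le_antisymm ?_ bot_le
  calc μH[d] A ≤ liminf (fun n => ∑' i, ediam (t n i) ^ d) atTop :=
        Measure.hausdorffMeasure_le_liminf_tsum d A _ hr t (.of_forall ht) (.of_forall hA)
    _ = 0 := hsum.liminf_eq

section Equation

variable {β : ℝ}

lemma strictMonoOn_mul_rpow (hβ : 1 ≤ β) : StrictMonoOn (fun t : ℝ => t * β ^ t) (Ici 0) := by
  intro t ht u _ htu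
  have hpow : β ^ t ≤ β ^ u := Real.rpow_le_rpow_of_exponent_le hβ htu.le
  have hpos : 0 < β ^ t := Real.rpow_pos_of_pos (by linarith) t
  nlinarith [mem_Ici.mp ht]

lemma exists_mem_Ioc_mul_rpow_eq (hβ : 1 ≤ β) {c : ℝ} (hc : 0 < c) (hcβ : c ≤ β) :
    ∃ t ∈ Ioc (0 : ℝ) 1, t * β ^ t = c := by
  have hcont : ContinuousOn (fun t : ℝ => t * β ^ t) (Icc 0 1) :=
    (continuous_id.mul (Real.continuous_const_rpow (by linarith))).continuousOn
  exact intermediate_value_Ioc zero_le_one hcont (by simpa using ⟨hc, hcβ⟩)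

end Equation

lemma tsum_ofReal_rpow_neg_le {β p : ℝ} (hβ : 0 < β) (hp : 1 < p) :
    ∑' k : ℕ, ENNReal.ofReal ((β + (k + 1)) ^ (-p)) ≤
      ENNReal.ofReal (1 / ((p - 1) * β ^ (p - 1))) := by
  rw [ENNReal.tsum_eq_iSup_nat]
  refine iSup_le fun n => ?_
  rw [← ENNReal.ofReal_sum_of_nonneg fun k _ => by positivity]
  refine ENNReal.ofReal_le_ofReal ?_
  have hanti : AntitoneOn (fun x : ℝ => x ^ (-p)) (Icc β (β + n)) :=
    fun x hx y _ hxy => Real.rpow_le_rpow_of_nonpos (hβ.trans_le hx.1) hxy (by linarith)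
  calc ∑ k ∈ Finset.range n, (β + (k + 1)) ^ (-p)
      = ∑ k ∈ Finset.range n, (fun x : ℝ => x ^ (-p)) (β + ↑(k + 1)) := by push_cast; rfl
    _ ≤ ∫ x in β..β + n, x ^ (-p) := hanti.sum_le_integral
    _ = ((β + n) ^ (-p + 1) - β ^ (-p + 1)) / (-p + 1) :=
        integral_rpow (Or.inr ⟨by linarith, notMem_uIcc_of_lt hβ (by positivity)⟩)
    _ ≤ 1 / ((p - 1) * β ^ (p - 1)) := by
        have : 0 ≤ (β + n) ^ (-(p - 1)) := by positivity
        rw [show -p + 1 = -(p - 1) by ring, Real.rpow_neg hβ.le, div_neg, ← neg_div, neg_sub,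
          one_div, mul_inv, ← div_eq_inv_mul]
        gcongr
        linarith

lemma tsum_ofReal_div_sq_rpow_le {N : ℕ} {α s : ℝ} (hα : 1 < α) (hs : 1 / 2 < s) :
    ∑' k : ℕ, ENNReal.ofReal (((N : ℝ) / (α + k) ^ 2) ^ s) ≤
      ENNReal.ofReal ((N : ℝ) ^ s / ((2 * s - 1) * (α - 1) ^ (2 * s - 1))) := by
  have hterm : ∀ k : ℕ,
      ((N : ℝ) / (α + k) ^ 2) ^ s = (N : ℝ) ^ s * (α - 1 + (k + 1)) ^ (-(2 * s)) := by
    intro k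
    have hk : 0 < α + k := by positivity
    rw [Real.div_rpow (Nat.cast_nonneg N) (by positivity), ← Real.rpow_natCast,
      ← Real.rpow_mul hk.le, div_eq_mul_inv, ← Real.rpow_neg hk.le]
    push_cast
    ring_nf
  calc ∑' k : ℕ, ENNReal.ofReal (((N : ℝ) / (α + k) ^ 2) ^ s)
      = ENNReal.ofReal ((N : ℝ) ^ s) *
          ∑' k : ℕ, ENNReal.ofReal ((α - 1 + (k + 1)) ^ (-(2 * s))) := by
        simp_rw [hterm, ENNReal.ofReal_mul (by positivity : (0 : ℝ) ≤ (N : ℝ) ^ s)]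
        exact ENNReal.tsum_mul_left
    _ ≤ ENNReal.ofReal ((N : ℝ) ^ s) *
          ENNReal.ofReal (1 / ((2 * s - 1) * (α - 1) ^ (2 * s - 1))) := by
        gcongr
        exact tsum_ofReal_rpow_neg_le (by linarith) (by linarith)
    _ = _ := by rw [← ENNReal.ofReal_mul (by positivity), mul_one_div]

lemma TN_mem_Icc (N : ℕ) (x : ℝ) : TN N x ∈ Icc 0 1 := by
  unfold TN
  split_ifs
  · simp
  · exact ⟨Int.fract_nonneg _, (Int.fract_lt_one _).le⟩

lemma digit_succ (N i : ℕ) (x : ℝ) : digit N (i + 1) x = digit N i (TN N x) := by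
  rw [digit, digit, Function.iterate_succ_apply]

lemma digit_zero_add_TN (N : ℕ) {x : ℝ} (hx : x ≠ 0) :
    (digit N 0 x : ℝ) + TN N x = N / x := by
  rw [digit, TN, if_neg hx]
  simp

lemma abs_div_sub_div_le {c a b e : ℝ} (hc : 0 ≤ c) (he : 0 < e) (ha : e ≤ a) (hb : e ≤ b) :
    |c / a - c / b| ≤ c / e ^ 2 * |a - b| := by
  have ha0 : 0 < a := he.trans_le ha
  have hb0 : 0 < b := he.trans_le hb
  rw [div_sub_div _ _ ha0.ne' hb0.ne', abs_div, abs_of_pos (mul_pos ha0 hb0),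
    show c * b - a * c = c * (b - a) by ring, abs_mul, abs_of_nonneg hc, abs_sub_comm,
    div_le_iff₀ (mul_pos ha0 hb0)]
  have : e ^ 2 ≤ a * b := by nlinarith
  calc c * |a - b| = c / e ^ 2 * |a - b| * e ^ 2 := by field_simp
    _ ≤ c / e ^ 2 * |a - b| * (a * b) := by gcongr

/-- `x = N / (d + TN N x)` with `d` the first digit, and `N / ·` is `N / d ^ 2`-Lipschitz on
`[d, ∞)`. -/
lemma dist_le_prod_of_digit_eq (N : ℕ) (n : ℕ) {x y : ℝ} (hx : x ∈ Icc 0 1) (hy : y ∈ Icc 0 1)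
    (hxy : ∀ i < n, digit N i x = digit N i y) (hpos : ∀ i < n, 1 ≤ digit N i x) :
    dist x y ≤ ∏ i ∈ Finset.range n, (N : ℝ) / (digit N i x : ℝ) ^ 2 := by
  induction n generalizing x y with
  | zero => simpa using Real.dist_le_of_mem_Icc_01 hx hy
  | succ n ih =>
    have hd : (1 : ℝ) ≤ digit N 0 x := by exact_mod_cast hpos 0 n.succ_pos
    have hne : ∀ {z : ℝ}, digit N 0 z = digit N 0 x → z ≠ 0 := by
      rintro z hz rfl
      have := hpos 0 n.succ_pos
      rw [← hz] at this
      simp [digit] at this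
    have hx0 := hne rfl
    have hy0 := hne (hxy 0 n.succ_pos).symm
    have hax := digit_zero_add_TN N hx0
    have hay := digit_zero_add_TN N hy0
    rw [← hxy 0 n.succ_pos] at hay
    have hN : (N : ℝ) ≠ 0 := by
      rintro h
      rw [h, zero_div] at hax
      linarith [(TN_mem_Icc N x).1]
    have hT := ih (TN_mem_Icc N x) (TN_mem_Icc N y)
      (fun i hi => by simpa only [digit_succ] using hxy (i + 1) (by omega))
      (fun i hi => by simpa only [digit_succ] using hpos (i + 1) (by omega))
    calc dist x y = |N / (N / x) - N / (N / y)| := by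
          rw [div_div_cancel₀ hN, div_div_cancel₀ hN, Real.dist_eq]
      _ ≤ N / (digit N 0 x : ℝ) ^ 2 * |N / x - N / y| :=
          abs_div_sub_div_le (Nat.cast_nonneg N) (by positivity)
            (by linarith [(TN_mem_Icc N x).1]) (by linarith [(TN_mem_Icc N y).1])
      _ = N / (digit N 0 x : ℝ) ^ 2 * dist (TN N x) (TN N y) := by
          rw [← hax, ← hay, Real.dist_eq]
          ring_nf
      _ ≤ N / (digit N 0 x : ℝ) ^ 2 *
            ∏ i ∈ Finset.range n, (N : ℝ) / (digit N i (TN N x) : ℝ) ^ 2 := by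
          gcongr
      _ = ∏ i ∈ Finset.range (n + 1), (N : ℝ) / (digit N i x : ℝ) ^ 2 := by
          simp only [Finset.prod_range_succ', digit_succ]
          ring

def digitCylinder (N : ℕ) {n : ℕ} (ε : Fin n → ℤ) : Set ℝ :=
  {x | x ∈ Icc 0 1 ∧ ∀ i : Fin n, digit N i x = ε i}

lemma ediam_digitCylinder_rpow_le (N : ℕ) {n : ℕ} (ε : Fin n → ℤ) (hε : ∀ i, 1 ≤ ε i) {s : ℝ}
    (hs : 0 ≤ s) :
    ediam (digitCylinder N ε) ^ s ≤ ∏ i, ENNReal.ofReal (((N : ℝ) / (ε i : ℝ) ^ 2) ^ s) := by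
  have hdiam : ediam (digitCylinder N ε) ≤ ENNReal.ofReal (∏ i, (N : ℝ) / (ε i : ℝ) ^ 2) := by
    refine ediam_le fun x ⟨hx, hxε⟩ y ⟨hy, hyε⟩ => ?_
    rw [edist_dist]
    refine ENNReal.ofReal_le_ofReal ?_
    have hdist := dist_le_prod_of_digit_eq N n hx hy
      (fun i hi => (hxε ⟨i, hi⟩).trans (hyε ⟨i, hi⟩).symm)
      (fun i hi => (hxε ⟨i, hi⟩).symm ▸ hε ⟨i, hi⟩)
    rw [← Fin.prod_univ_eq_prod_range (fun i => (N : ℝ) / (digit N i x : ℝ) ^ 2)] at hdist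
    simpa only [hxε] using hdist
  have hnn : ∀ i ∈ Finset.univ, 0 ≤ (N : ℝ) / (ε i : ℝ) ^ 2 := fun i _ => by positivity
  calc ediam (digitCylinder N ε) ^ s
      ≤ ENNReal.ofReal (∏ i, (N : ℝ) / (ε i : ℝ) ^ 2) ^ s := by gcongr
    _ = _ := by
      rw [ENNReal.ofReal_rpow_of_nonneg (Finset.prod_nonneg hnn) hs,
        ← Real.finsetProd_rpow _ _ hnn, ENNReal.ofReal_prod_of_nonneg fun i _ => by positivity]

lemma hausdorffMeasure_Fset_eq_zero {N : ℕ} {α : ℤ} {s : ℝ} (hα : 1 < α) (hs : 1 / 2 < s)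
    (hC : (N : ℝ) ^ s / ((2 * s - 1) * ((α : ℝ) - 1) ^ (2 * s - 1)) < 1) :
    μH[s] (Fset N α) = 0 := by
  set C := ENNReal.ofReal ((N : ℝ) ^ s / ((2 * s - 1) * ((α : ℝ) - 1) ^ (2 * s - 1)))
  have hcover : ∀ n, Fset N α ⊆ ⋃ k : Fin n → ℕ, digitCylinder N fun i => α + k i := by
    intro n x ⟨hx, _, hxα⟩
    refine mem_iUnion.2 ⟨fun i => (digit N i x - α).toNat, Ioo_subset_Icc_self hx, fun i => ?_⟩
    have : α ≤ digit N i x := by exact_mod_cast hxα i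
    show digit N i x = α + ((digit N i x - α).toNat : ℤ)
    omega
  have hsum : ∀ n, ∑' k : Fin n → ℕ, ediam (digitCylinder N fun i => α + k i) ^ s ≤ C ^ n := by
    intro n
    calc ∑' k : Fin n → ℕ, ediam (digitCylinder N fun i => α + k i) ^ s
        ≤ ∑' k : Fin n → ℕ, ∏ i, ENNReal.ofReal (((N : ℝ) / ((α : ℝ) + k i) ^ 2) ^ s) := by
          gcongr with k
          convert ediam_digitCylinder_rpow_le N (fun i => α + k i) (fun i => by omega)
            (by linarith : 0 ≤ s) using 5 <;> push_cast <;> rfl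
      _ = (∑' j : ℕ, ENNReal.ofReal (((N : ℝ) / ((α : ℝ) + j) ^ 2) ^ s)) ^ n :=
          ENNReal.tsum_fin_pi_prod (fun j : ℕ => ENNReal.ofReal (((N : ℝ) / ((α : ℝ) + j) ^ 2) ^ s))
            n
      _ ≤ C ^ n := by
          gcongr
          exact tsum_ofReal_div_sq_rpow_le (by exact_mod_cast hα) hs
  refine hausdorffMeasure_eq_zero_of_tendsto_tsum (by linarith) _ hcover ?_
  exact tendsto_of_tendsto_of_tendsto_of_le_of_le tendsto_const_nhds
    (ENNReal.tendsto_pow_atTop_nhds_zero_of_lt_one (ENNReal.ofReal_lt_one.2 hC))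
    (fun _ => bot_le) hsum

theorem stmt_19_general (N : ℕ) (α : ℤ) (hα : (N : ℤ) + 2 ≤ α) :
    ∃ s : ℝ,
      (s ∈ Set.Ioc (1 / 2 : ℝ) 1 ∧
        (2 * s - 1) * ((α : ℝ) - 1) ^ (2 * s - 1) = 1 + (N : ℝ)) ∧
      (∀ s' : ℝ, s' ∈ Set.Ioc (1 / 2 : ℝ) 1 →
        (2 * s' - 1) * ((α : ℝ) - 1) ^ (2 * s' - 1) = 1 + (N : ℝ) → s' = s) ∧
      dimH (Fset N (α : ℝ)) ≤ ENNReal.ofReal s := by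
  have hαR : (N : ℝ) + 2 ≤ α := by exact_mod_cast hα
  obtain ⟨t, ⟨ht0, ht1⟩, heq⟩ := exists_mem_Ioc_mul_rpow_eq (β := α - 1) (c := 1 + N)
    (by linarith) (by positivity) (by linarith)
  have h2s : 2 * ((t + 1) / 2) - 1 = t := by ring
  refine ⟨(t + 1) / 2, ⟨⟨by linarith, by linarith⟩, by rwa [h2s]⟩, fun s' hs' heq' => ?_, ?_⟩
  · have := (strictMonoOn_mul_rpow (β := α - 1) (by linarith)).injOn
      (mem_Ici.2 (by linarith [hs'.1] : (0 : ℝ) ≤ 2 * s' - 1)) ht0.le (heq'.trans heq.symm)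
    linarith
  · have hNs : (N : ℝ) ^ ((t + 1) / 2) < 1 + N :=
      (Real.rpow_lt_rpow (by positivity) (lt_one_add _) (by linarith)).trans_le
        (Real.rpow_le_self_of_one_le (by linarith) (by linarith))
    have h0 : μH[(t + 1) / 2] (Fset N α) = 0 :=
      hausdorffMeasure_Fset_eq_zero (by omega) (by linarith)
        (by rwa [h2s, heq, div_lt_one (by positivity)])
    refine dimH_le_of_hausdorffMeasure_ne_top ?_
    rw [Real.coe_toNNReal _ (by linarith), h0]
    exact ENNReal.zero_ne_top

/-- For an integer `α ≥ N + 2` there exists a unique `s ∈ (1/2, 1]` with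
`(2s-1)(α-1)^{2s-1} = 1 + N`, and for this `s` one has `dim_H(F_{α,N}) ≤ s`. -/
theorem stmt_19 (N : ℕ) (hN : 1 ≤ N) (α : ℤ) (hα : (N : ℤ) + 2 ≤ α) :
    ∃ s : ℝ,
      (s ∈ Set.Ioc (1 / 2 : ℝ) 1 ∧
        (2 * s - 1) * ((α : ℝ) - 1) ^ (2 * s - 1) = 1 + (N : ℝ)) ∧
      (∀ s' : ℝ, s' ∈ Set.Ioc (1 / 2 : ℝ) 1 →
        (2 * s' - 1) * ((α : ℝ) - 1) ^ (2 * s' - 1) = 1 + (N : ℝ) → s' = s) ∧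
      dimH (Fset N (α : ℝ)) ≤ ENNReal.ofReal s :=
  stmt_19_general N α hα
end
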